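/- arXiv:math/0212287 — 4 statements merged into one kernel-verified Lean document; each statement's English description precedes it below -/
import Mathlib

section
/- Let f : ℝⁿ → ℝⁿ be locally Lipschitz with f(0) = 0 and 0 asymptotically stable. Suppose V : DA → ℝ is differentiable on the domain of attraction DA, satisfies ⟨∇V(x), f(x)⟩ = -‖x‖² for all x ∈ DA, and V(0) = 0. Then V(x) = ∫₀^∞ ‖φ(t,x)‖² dt for every x ∈ DA, where φ(t,x) is the flow of ẋ = f(x). In particular V is uniquely determined by these conditions. -/
open Filter Topology

/-- The domain of attraction of the origin for the ODE `ẋ = f x`. -/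
def domainOfAttraction {n : ℕ} (f : EuclideanSpace ℝ (Fin n) → EuclideanSpace ℝ (Fin n)) :
    Set (EuclideanSpace ℝ (Fin n)) :=
  {x₀ | ∃ γ : ℝ → EuclideanSpace ℝ (Fin n), γ 0 = x₀ ∧
    (∀ t, HasDerivAt γ (f (γ t)) t) ∧ Tendsto γ atTop (𝓝 0)}

/-- Global uniqueness for autonomous ODEs with locally Lipschitz RHS. -/
lemma ode_unique_of_locallyLipschitz {E : Type*} [NormedAddCommGroup E] [NormedSpace ℝ E]
    {f : E → E} (hfl : LocallyLipschitz f)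
    {γ₁ γ₂ : ℝ → E} (h₁ : ∀ t, HasDerivAt γ₁ (f (γ₁ t)) t)
    (h₂ : ∀ t, HasDerivAt γ₂ (f (γ₂ t)) t) (h0 : γ₁ 0 = γ₂ 0) :
    ∀ t, γ₁ t = γ₂ t := by
  have hc₁ : Continuous γ₁ := continuous_iff_continuousAt.2 fun t => (h₁ t).continuousAt
  have hc₂ : Continuous γ₂ := continuous_iff_continuousAt.2 fun t => (h₂ t).continuousAt
  have hclopen : IsClopen {t | γ₁ t = γ₂ t} := by
    constructor
    · exact isClosed_eq hc₁ hc₂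
    · rw [isOpen_iff_mem_nhds]
      intro t ht
      obtain ⟨K, s, hs, hK⟩ := hfl (γ₁ t)
      have hs' : s ∈ 𝓝 (γ₂ t) := by rw [← ht]; exact hs
      have hf : ∀ᶠ u in 𝓝 t, HasDerivAt γ₁ (f (γ₁ u)) u ∧ γ₁ u ∈ s :=
        Filter.eventually_of_mem (hc₁.continuousAt.preimage_mem_nhds hs)
          fun u hu => ⟨h₁ u, hu⟩
      have hg : ∀ᶠ u in 𝓝 t, HasDerivAt γ₂ (f (γ₂ u)) u ∧ γ₂ u ∈ s :=
        Filter.eventually_of_mem (hc₂.continuousAt.preimage_mem_nhds hs')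
          fun u hu => ⟨h₂ u, hu⟩
      exact ODE_solution_unique_of_eventually (v := fun _ => f) (s := fun _ => s)
        (.of_forall fun _ => hK) hf hg ht
  rcases isClopen_iff.1 hclopen with h | h
  · exact absurd (h ▸ h0 : (0 : ℝ) ∈ (∅ : Set ℝ)) (Set.notMem_empty 0)
  · intro t; exact (Set.eq_univ_iff_forall.1 h) t

theorem stmt_2 (n : ℕ)
    (f : EuclideanSpace ℝ (Fin n) → EuclideanSpace ℝ (Fin n))
    (hfl : LocallyLipschitz f) (hf0 : f 0 = 0)
    -- asymptotic stability of 0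
    (hstab : ∀ ε > 0, ∃ δ > 0, ∀ x : ℝ → EuclideanSpace ℝ (Fin n),
      (∀ t, HasDerivAt x (f (x t)) t) → ‖x 0‖ < δ → ∀ t ≥ 0, ‖x t‖ < ε)
    (hattr : ∃ δ > 0, ∀ x : ℝ → EuclideanSpace ℝ (Fin n),
      (∀ t, HasDerivAt x (f (x t)) t) → ‖x 0‖ < δ → Tendsto x atTop (𝓝 0))
    -- the flow of the system on the domain of attraction
    (φ : ℝ → EuclideanSpace ℝ (Fin n) → EuclideanSpace ℝ (Fin n))
    (hφ0 : ∀ x ∈ domainOfAttraction f, φ 0 x = x)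
    (hφode : ∀ x ∈ domainOfAttraction f, ∀ t, HasDerivAt (fun s => φ s x) (f (φ t x)) t)
    (V : EuclideanSpace ℝ (Fin n) → ℝ)
    (hVdiff : ∀ x ∈ domainOfAttraction f, DifferentiableAt ℝ V x)
    (hVeq : ∀ x ∈ domainOfAttraction f, inner ℝ (gradient V x) (f x) = -‖x‖ ^ 2)
    (hV0 : V 0 = 0) :
    ∀ x ∈ domainOfAttraction f, V x = ∫ t in Set.Ioi (0 : ℝ), ‖φ t x‖ ^ 2 := by
  intro x hx
  -- 0 is in the domain of attraction
  have h0DA : (0 : EuclideanSpace ℝ (Fin n)) ∈ domainOfAttraction f :=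
    ⟨fun _ => (0 : EuclideanSpace ℝ (Fin n)), rfl,
      fun t => by simpa [hf0] using hasDerivAt_const t (0 : EuclideanSpace ℝ (Fin n)),
      tendsto_const_nhds⟩
  obtain ⟨γ, hγ0, hγode, hγtend⟩ := hx
  have hx' : x ∈ domainOfAttraction f := ⟨γ, hγ0, hγode, hγtend⟩
  -- the flow through x coincides with γ
  have heq : ∀ t, φ t x = γ t := by
    apply ode_unique_of_locallyLipschitz hfl (hφode x hx') hγode
    rw [hφ0 x hx', hγ0]
  have hφtend : Tendsto (fun t => φ t x) atTop (𝓝 0) := by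
    rw [tendsto_congr heq]; exact hγtend
  -- every point on the trajectory is in the domain of attraction
  have hmem : ∀ t : ℝ, φ t x ∈ domainOfAttraction f := by
    intro t
    refine ⟨fun s => φ (s + t) x, by simp, ?_, ?_⟩
    · intro s
      have h1 : HasDerivAt (fun u => φ u x) (f (φ (s + t) x)) (s + t) := hφode x hx' (s + t)
      have h2 : HasDerivAt (fun u : ℝ => u + t) 1 s := (hasDerivAt_id s).add_const t
      have := h1.scomp s h2
      simpa [Function.comp_def] using this
    · exact hφtend.comp (tendsto_atTop_add_const_right atTop t tendsto_id)
  -- the derivative of -V along the flow is ‖φ t x‖²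
  have hderiv : ∀ t : ℝ, HasDerivAt (fun s => -(V (φ s x))) (‖φ t x‖ ^ 2) t := by
    intro t
    have h1 : HasDerivAt (fun s => V (φ s x)) (fderiv ℝ V (φ t x) (f (φ t x))) t :=
      (hVdiff _ (hmem t)).hasFDerivAt.comp_hasDerivAt t (hφode x hx' t)
    have h2 : fderiv ℝ V (φ t x) (f (φ t x)) = -‖φ t x‖ ^ 2 := by
      rw [← hVeq _ (hmem t), gradient, InnerProductSpace.toDual_symm_apply]
    rw [h2] at h1
    have h3 := h1.neg; rw [neg_neg] at h3; exact h3
  -- -V(φ t x) tends to 0 at infinity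
  have htend : Tendsto (fun t => -(V (φ t x))) atTop (𝓝 0) := by
    have : Tendsto (fun t => V (φ t x)) atTop (𝓝 (V 0)) :=
      (hVdiff 0 h0DA).continuousAt.tendsto.comp hφtend
    rw [hV0] at this
    simpa using this.neg
  have key := MeasureTheory.integral_Ioi_of_hasDerivAt_of_nonneg
    (g := fun s => -(V (φ s x))) (g' := fun s => ‖φ s x‖ ^ 2) (a := 0) (l := 0)
    ((hderiv 0).continuousAt.continuousWithinAt)
    (fun t _ => hderiv t) (fun t _ => by positivity) htend
  simpa [hφ0 x hx'] using key.symm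
end

section
/- Consider the system in ℝ³: ẋᵢ = -xᵢ(1 - x₁² - x₂² + x₃²) for i = 1,2,3. Every point on the set {1 - x₁² - x₂² + x₃² = 0} is an equilibrium, and every solution starting at a point with 1 - x₁² - x₂² + x₃² > 0 in the connected component of that region containing the origin converges to the origin. -/
/-! Write `h = g ∘ x` along a solution. Since `ẋ = -h x` and `g = 1 - Q` for a diagonal quadratic
form `Q`, `h` solves the logistic equation `h' = 2h(1 - h)`. The defect
`h D - h(0) e^{2t}`, with `D t = 1 - h(0) + h(0) e^{2t}`, solves a linear equation and vanishes
at `0`, hence everywhere by Grönwall; consequently every coordinate satisfies `(x_i² D)' = 0`,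
so `x_i² = x_i(0)² / D → 0` once `h(0) > 0`. -/

open Filter Topology Real Set

section LinearODE

variable {E : Type*} [NormedAddCommGroup E] [NormedSpace ℝ E] {a : ℝ → ℝ} {k : ℝ → E}

theorem eq_zero_of_hasDerivAt_smul_self_of_le (ha : Continuous a)
    (hk : ∀ t, HasDerivAt k (a t • k t) t) {t₀ t : ℝ} (h₀ : k t₀ = 0) (ht : t₀ ≤ t) :
    k t = 0 := by
  obtain ⟨C, hC⟩ := isCompact_Icc.exists_bound_of_continuousOn (ha.continuousOn (s := Icc t₀ t))
  refine eq_zero_of_abs_deriv_le_mul_abs_self_of_eq_zero_right (K := C)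
    (fun s _ => (hk s).continuousAt.continuousWithinAt) (fun s _ => (hk s).hasDerivWithinAt)
    h₀ (fun s hs => ?_) t ⟨ht, le_rfl⟩
  rw [norm_smul]
  exact mul_le_mul_of_nonneg_right (hC s (Ico_subset_Icc_self hs)) (norm_nonneg _)

theorem eq_zero_of_hasDerivAt_smul_self (ha : Continuous a)
    (hk : ∀ t, HasDerivAt k (a t • k t) t) {t₀ : ℝ} (h₀ : k t₀ = 0) (t : ℝ) : k t = 0 := by
  rcases le_total t₀ t with ht | ht
  · exact eq_zero_of_hasDerivAt_smul_self_of_le ha hk h₀ ht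
  · have hk' : ∀ s, HasDerivAt (fun s => k (-s)) (-a (-s) • k (-s)) s := fun s => by
      simpa [Function.comp_def, neg_smul] using (hk (-s)).scomp s (hasDerivAt_neg s)
    simpa using eq_zero_of_hasDerivAt_smul_self_of_le (ha.comp continuous_neg).neg hk'
      (t₀ := -t₀) (by simpa using h₀) (neg_le_neg ht)

end LinearODE

section Logistic

/-- The solution of `h' = 2h(1 - h)`, `h 0 = c` is `c e^{2t} / logisticDenom c t`. -/
noncomputable def logisticDenom (c t : ℝ) : ℝ := 1 - c + c * exp (2 * t)

theorem logisticDenom_zero (c : ℝ) : logisticDenom c 0 = 1 := by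
  simp [logisticDenom]

theorem hasDerivAt_logisticDenom (c t : ℝ) :
    HasDerivAt (logisticDenom c) (2 * c * exp (2 * t)) t := by
  refine ((((hasDerivAt_id t).const_mul 2).exp.const_mul c).const_add (1 - c)).congr_deriv ?_
  simp only [id, mul_one]
  ring

theorem tendsto_logisticDenom_atTop {c : ℝ} (hc : 0 < c) :
    Tendsto (logisticDenom c) atTop atTop :=
  tendsto_atTop_add_const_left _ _ <|
    (tendsto_exp_atTop.comp (tendsto_id.const_mul_atTop two_pos)).const_mul_atTop hc

variable {h y : ℝ → ℝ}

theorem mul_logisticDenom_eq_of_logistic (hh : ∀ t, HasDerivAt h (2 * h t * (1 - h t)) t)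
    (t : ℝ) : h t * logisticDenom (h 0) t = h 0 * exp (2 * t) := by
  have hk : ∀ t, HasDerivAt (fun t => h t * logisticDenom (h 0) t - h 0 * exp (2 * t))
      ((2 * (1 - h t)) • (h t * logisticDenom (h 0) t - h 0 * exp (2 * t))) t := fun t => by
    refine (((hh t).mul (hasDerivAt_logisticDenom (h 0) t)).sub
      (((hasDerivAt_id t).const_mul 2).exp.const_mul (h 0))).congr_deriv ?_
    simp only [logisticDenom, smul_eq_mul, id, mul_one]
    ring
  have ha : Continuous fun t => 2 * (1 - h t) :=
    continuous_const.mul (continuous_const.sub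
      (continuous_iff_continuousAt.2 fun t => (hh t).continuousAt))
  refine sub_eq_zero.1 (eq_zero_of_hasDerivAt_smul_self ha hk (t₀ := 0) ?_ t)
  simp [logisticDenom_zero]

theorem sq_mul_logisticDenom_eq (hh : ∀ t, HasDerivAt h (2 * h t * (1 - h t)) t)
    (hy : ∀ t, HasDerivAt y (-y t * h t) t) (t : ℝ) :
    y t ^ 2 * logisticDenom (h 0) t = y 0 ^ 2 := by
  have hm : ∀ t, HasDerivAt (fun t => y t ^ 2 * logisticDenom (h 0) t) 0 t := fun t => by
    refine (((hy t).fun_pow 2).mul (hasDerivAt_logisticDenom (h 0) t)).congr_deriv ?_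
    linear_combination (-2 * y t ^ 2) * mul_logisticDenom_eq_of_logistic hh t
  simpa [logisticDenom_zero] using
    is_const_of_deriv_eq_zero (fun t => (hm t).differentiableAt) (fun t => (hm t).deriv) t 0

theorem tendsto_zero_of_logistic (hh : ∀ t, HasDerivAt h (2 * h t * (1 - h t)) t)
    (hy : ∀ t, HasDerivAt y (-y t * h t) t) (h₀ : 0 < h 0) : Tendsto y atTop (𝓝 0) := by
  have hD := tendsto_logisticDenom_atTop h₀
  have hsq : Tendsto (fun t => y t ^ 2) atTop (𝓝 0) := by
    refine ((tendsto_const_nhds (x := y 0 ^ 2)).div_atTop hD).congr' ?_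
    filter_upwards [hD.eventually_gt_atTop 0] with t ht
    rw [← sq_mul_logisticDenom_eq hh hy t, mul_div_cancel_right₀ _ ht.ne']
  have habs := hsq.sqrt
  simp only [sqrt_sq_eq_abs, sqrt_zero] at habs
  exact (tendsto_zero_iff_abs_tendsto_zero y).2 habs

end Logistic

section Radial

variable {n : ℕ} (w : Fin n → ℝ) {x : ℝ → Fin n → ℝ} {h : ℝ → ℝ}

theorem hasDerivAt_logistic_of_radial (hh : ∀ t, h t = 1 - ∑ i, w i * x t i ^ 2)
    (hx : ∀ t, HasDerivAt x (-h t • x t) t) (t : ℝ) :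
    HasDerivAt h (2 * h t * (1 - h t)) t := by
  have hQ : HasDerivAt (fun t => ∑ i, w i * x t i ^ 2)
      (∑ i, w i * (2 * x t i ^ 1 * (-h t * x t i))) t :=
    HasDerivAt.fun_sum fun i _ => ((hasDerivAt_pi.1 (hx t) i).fun_pow 2).const_mul (w i)
  have hQ' : ∑ i, w i * (2 * x t i ^ 1 * (-h t * x t i)) = -2 * h t * ∑ i, w i * x t i ^ 2 := by
    rw [Finset.mul_sum]
    exact Finset.sum_congr rfl fun i _ => by ring
  refine ((hQ.const_sub 1).congr_of_eventuallyEq (.of_forall hh)).congr_deriv ?_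
  rw [hQ', hh t]
  ring

theorem tendsto_nhds_zero_of_radial (hh : ∀ t, h t = 1 - ∑ i, w i * x t i ^ 2)
    (hx : ∀ t, HasDerivAt x (-h t • x t) t) (h₀ : 0 < h 0) : Tendsto x atTop (𝓝 0) :=
  tendsto_pi_nhds.2 fun i => tendsto_zero_of_logistic (hasDerivAt_logistic_of_radial w hh hx)
    (fun t => by simpa [mul_comm] using hasDerivAt_pi.1 (hx t) i) h₀

end Radial

theorem stmt_6
    (g : (Fin 3 → ℝ) → ℝ)
    (hg : g = fun x => 1 - (x 0) ^ 2 - (x 1) ^ 2 + (x 2) ^ 2)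
    (f : (Fin 3 → ℝ) → (Fin 3 → ℝ))
    (hf : f = fun x i => -(x i) * g x) :
    (∀ x, g x = 0 → f x = 0) ∧
    (∀ x₀ ∈ connectedComponentIn {x : Fin 3 → ℝ | 0 < g x} 0,
      ∀ x : ℝ → (Fin 3 → ℝ), x 0 = x₀ → (∀ t, HasDerivAt x (f (x t)) t) →
        Tendsto x atTop (𝓝 0)) := by
  refine ⟨fun y hy => funext fun i => by simp [hf, hy], fun x₀ hx₀ x hx0 hx => ?_⟩
  have hpos : 0 < g (x 0) := hx0 ▸ connectedComponentIn_subset {x | 0 < g x} 0 hx₀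
  refine tendsto_nhds_zero_of_radial ![1, 1, -1] (h := fun t => g (x t))
    (fun t => ?_) (fun t => (hx t).congr_deriv ?_) hpos
  · simp only [hg, Fin.sum_univ_three, Matrix.cons_val_zero, Matrix.cons_val_one, Matrix.cons_val,
      one_mul, neg_mul]
    ring
  · ext i
    simp [hf, mul_comm]
end

section
/- For the scalar ODE ρ̇ = -h(ρ)·ρ where h : ℝ → ℝ is continuous, h > 0 on [0, r), and h(r) = 0, every solution with initial condition ρ(0) = ρ₀ ∈ (0, r) satisfies ρ(t) ∈ (0, r) for all t ≥ 0 and ρ(t) → 0 as t → ∞; moreover the solution ρ ≡ r is an equilibrium. -/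
/-!
For `t ≥ 0` the solution is trapped between the exponentials `ρ₀ e^{-K t}` and `ρ₀ e^{-k t}`,
where `0 < k < h < K` on `(0, ρ₀]`; such rates exist because `h` is continuous and positive on the
compact interval `[0, ρ₀] ⊆ [0, r)`. Each exponential is a barrier: at a contact point the common
value lies in `(0, ρ₀]`, so the strict rate comparison makes the derivatives cross in the right
direction and the fencing theorem applies. The lower barrier keeps `ρ` positive, the upper one
keeps it below `ρ₀ < r` and drives it to `0`.
-/

open Filter Topology Real Set

theorem hasDerivAt_mul_exp_neg_mul (c k x : ℝ) :
    HasDerivAt (fun t => c * exp (-(k * t))) (-k * (c * exp (-(k * x)))) x := by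
  have hlin : HasDerivAt (fun t => -(k * t)) (-k) x := by
    simpa using (hasDerivAt_id' x).const_mul (-k)
  exact (hlin.exp.const_mul c).congr_deriv (by ring)

theorem mul_exp_neg_mul_mem_Ioc {c k t : ℝ} (hc : 0 < c) (hk : 0 ≤ k) (ht : 0 ≤ t) :
    c * exp (-(k * t)) ∈ Ioc 0 c :=
  ⟨by positivity, mul_le_of_le_one_right hc.le (exp_le_one_iff.2 (by nlinarith))⟩

section Barriers

variable {h ρ : ℝ → ℝ} {k t : ℝ}

theorem le_mul_exp_neg_of_lt_rate (hρ : ∀ t, HasDerivAt ρ (-h (ρ t) * ρ t) t)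
    (hρ0 : 0 < ρ 0) (hk : 0 ≤ k) (hkh : ∀ s ∈ Ioc 0 (ρ 0), k < h s) (ht : 0 ≤ t) :
    ρ t ≤ ρ 0 * exp (-(k * t)) := by
  have hρc : Continuous ρ := continuous_iff_continuousAt.2 fun t => (hρ t).continuousAt
  refine image_le_of_deriv_right_lt_deriv_boundary (a := 0) (b := t) hρc.continuousOn
    (fun x _ => (hρ x).hasDerivWithinAt) (by simp) (hasDerivAt_mul_exp_neg_mul (ρ 0) k)
    (fun x hx hcontact => ?_) ⟨ht, le_rfl⟩
  have hB := mul_exp_neg_mul_mem_Ioc hρ0 hk hx.1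
  rw [hcontact]
  nlinarith [hkh _ hB, hB.1]

theorem mul_exp_neg_le_of_rate_lt (hρ : ∀ t, HasDerivAt ρ (-h (ρ t) * ρ t) t)
    (hρ0 : 0 < ρ 0) (hk : 0 ≤ k) (hhk : ∀ s ∈ Ioc 0 (ρ 0), h s < k) (ht : 0 ≤ t) :
    ρ 0 * exp (-(k * t)) ≤ ρ t := by
  refine image_le_of_deriv_right_lt_deriv_boundary (a := 0) (b := t)
    (by fun_prop : Continuous fun t => ρ 0 * exp (-(k * t))).continuousOn
    (fun x _ => (hasDerivAt_mul_exp_neg_mul (ρ 0) k x).hasDerivWithinAt) (by simp) hρ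
    (fun x hx hcontact => ?_) ⟨ht, le_rfl⟩
  have hB := mul_exp_neg_mul_mem_Ioc hρ0 hk hx.1
  rw [← hcontact]
  nlinarith [hhk _ hB, hB.1]

end Barriers

theorem stmt_8_general
    (h : ℝ → ℝ) (hc : Continuous h) (r : ℝ)
    (hpos : ∀ s ∈ Set.Ico (0 : ℝ) r, 0 < h s) (hzero : h r = 0) :
    (∀ ρ : ℝ → ℝ, (∀ t, HasDerivAt ρ (-h (ρ t) * ρ t) t) →
      ∀ ρ₀ ∈ Set.Ioo (0 : ℝ) r, ρ 0 = ρ₀ →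
        (∀ t ≥ 0, ρ t ∈ Set.Ioo (0 : ℝ) r) ∧ Tendsto ρ atTop (𝓝 0)) ∧
    (∀ t : ℝ, HasDerivAt (fun _ : ℝ => r) (-h r * r) t) := by
  refine ⟨fun ρ hρ ρ₀ hρ₀ hρρ₀ => ?_, fun t => by simpa [hzero] using hasDerivAt_const t r⟩
  subst hρρ₀
  have hIcc : Icc 0 (ρ 0) ⊆ Ico 0 r := Icc_subset_Ico_right hρ₀.2
  obtain ⟨k, hk, hkh⟩ := isCompact_Icc.exists_forall_le' hc.continuousOn
    fun s hs => hpos s (hIcc hs)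
  obtain ⟨K, hK⟩ := isCompact_Icc.bddAbove_image (f := h) (K := Icc 0 (ρ 0)) hc.continuousOn
  have hhK (s) (hs : s ∈ Icc 0 (ρ 0)) : h s < K + 1 := (hK ⟨s, hs, rfl⟩).trans_lt (lt_add_one K)
  have hK1 : 0 ≤ K + 1 := ((hpos 0 (hIcc ⟨le_rfl, hρ₀.1.le⟩)).trans (hhK 0 ⟨le_rfl, hρ₀.1.le⟩)).le
  have hρ_le (t) (ht : 0 ≤ t) : ρ t ≤ ρ 0 * exp (-(k / 2 * t)) :=
    le_mul_exp_neg_of_lt_rate hρ hρ₀.1 (by positivity)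
      (fun s hs => (half_lt_self hk).trans_le (hkh s (Ioc_subset_Icc_self hs))) ht
  have hρ_pos (t) (ht : 0 ≤ t) : 0 < ρ t :=
    (mul_exp_neg_mul_mem_Ioc hρ₀.1 hK1 ht).1.trans_le <|
      mul_exp_neg_le_of_rate_lt hρ hρ₀.1 hK1 (fun s hs => hhK s (Ioc_subset_Icc_self hs)) ht
  refine ⟨fun t ht => ⟨hρ_pos t ht, ?_⟩, ?_⟩
  · exact (hρ_le t ht).trans_lt <|
      (mul_exp_neg_mul_mem_Ioc hρ₀.1 (by positivity) ht).2.trans_lt hρ₀.2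
  · have hdecay : Tendsto (fun t => ρ 0 * exp (-(k / 2 * t))) atTop (𝓝 0) := by
      simpa using (tendsto_exp_neg_atTop_nhds_zero.comp
        (tendsto_id.const_mul_atTop (half_pos hk))).const_mul (ρ 0)
    refine tendsto_of_tendsto_of_tendsto_of_le_of_le' tendsto_const_nhds hdecay ?_ ?_
    · filter_upwards [eventually_ge_atTop 0] with t ht using (hρ_pos t ht).le
    · filter_upwards [eventually_ge_atTop 0] with t ht using hρ_le t ht

theorem stmt_8
    (h : ℝ → ℝ) (hc : Continuous h) (r : ℝ) (hr : 0 < r)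
    (hpos : ∀ s ∈ Set.Ico (0 : ℝ) r, 0 < h s) (hzero : h r = 0) :
    (∀ ρ : ℝ → ℝ, (∀ t, HasDerivAt ρ (-h (ρ t) * ρ t) t) →
      ∀ ρ₀ ∈ Set.Ioo (0 : ℝ) r, ρ 0 = ρ₀ →
        (∀ t ≥ 0, ρ t ∈ Set.Ioo (0 : ℝ) r) ∧ Tendsto ρ atTop (𝓝 0)) ∧
    (∀ t : ℝ, HasDerivAt (fun _ : ℝ => r) (-h r * r) t) :=
  stmt_8_general h hc r hpos hzero
end

section
/- Let W(z) = Σ_{|j|≥2} B_j z^j be a formal power series in n complex variables with no constant or linear terms, and let g_i(z) = λ_i z_i + (higher order terms) with Σᵢ jᵢλᵢ ≠ 0 for all multi-indices j with |j| ≥ 2. Then the equation Σᵢ (∂W/∂zᵢ)·gᵢ = -‖Sz‖² (where the right side is a fixed quadratic form) determines the coefficients B_j uniquely: the degree-m coefficients of W for m ≥ 3 are determined recursively by the coefficients of degree < m together with the coefficients of g. -/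
open Filter Topology

/-- Formal partial derivative of a multivariate power series with respect to `zᵢ`. -/
noncomputable def mvPderiv {n : ℕ} (i : Fin n) (W : MvPowerSeries (Fin n) ℂ) :
    MvPowerSeries (Fin n) ℂ :=
  fun j => ((j i : ℂ) + 1) * MvPowerSeries.coeff (R := ℂ) (j + Finsupp.single i 1) W

lemma degSingle {n : ℕ} (i : Fin n) : (∑ k, (Finsupp.single i (1:ℕ)) k) = 1 := by
  simp [Finsupp.single_apply]

lemma degAdd {n : ℕ} (a b : Fin n →₀ ℕ) : (∑ k, (a + b) k) = (∑ k, a k) + ∑ k, b k := by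
  simp [Finsupp.add_apply, Finset.sum_add_distrib]

theorem stmt_11 (n : ℕ) (lam : Fin n → ℂ) (S : Matrix (Fin n) (Fin n) ℂ)
    (g : Fin n → MvPowerSeries (Fin n) ℂ)
    -- gᵢ(z) = λᵢ zᵢ + higher order terms
    (hg : ∀ i, ∀ j : Fin n →₀ ℕ, (∑ k, j k) ≤ 1 →
      MvPowerSeries.coeff (R := ℂ) j (g i) = if j = Finsupp.single i 1 then lam i else 0)
    -- non-resonance condition
    (hres : ∀ j : Fin n →₀ ℕ, 2 ≤ ∑ k, j k → (∑ i, (j i : ℂ) * lam i) ≠ 0)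
    (Q : MvPowerSeries (Fin n) ℂ)
    (hQ : Q = -∑ i, (∑ k, MvPowerSeries.C (σ := Fin n) (R := ℂ) (S i k) * MvPowerSeries.X k) ^ 2) :
    ∀ W W' : MvPowerSeries (Fin n) ℂ,
      (∀ j : Fin n →₀ ℕ, (∑ k, j k) ≤ 1 → MvPowerSeries.coeff (R := ℂ) j W = 0) →
      (∀ j : Fin n →₀ ℕ, (∑ k, j k) ≤ 1 → MvPowerSeries.coeff (R := ℂ) j W' = 0) →
      (∑ i, mvPderiv i W * g i) = Q →
      (∑ i, mvPderiv i W' * g i) = Q →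
      W = W' := by
  intro W W' hW hW' hE hE'
  set V := W - W' with hV
  have hVlow : ∀ j : Fin n →₀ ℕ, (∑ k, j k) ≤ 1 → MvPowerSeries.coeff (R := ℂ) j V = 0 := by
    intro j hj
    rw [hV, map_sub, hW j hj, hW' j hj, sub_self]
  have hDer : ∀ i, mvPderiv i V = mvPderiv i W - mvPderiv i W' := by
    intro i
    funext j
    show ((j i : ℂ) + 1) * MvPowerSeries.coeff (R := ℂ) (j + Finsupp.single i 1) V = _
    rw [hV, map_sub]
    show _ = ((j i : ℂ) + 1) * MvPowerSeries.coeff (R := ℂ) (j + Finsupp.single i 1) W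
      - ((j i : ℂ) + 1) * MvPowerSeries.coeff (R := ℂ) (j + Finsupp.single i 1) W'
    ring
  have hEq : (∑ i, mvPderiv i V * g i) = 0 := by
    have h1 : ∑ i, mvPderiv i V * g i
        = (∑ i, mvPderiv i W * g i) - (∑ i, mvPderiv i W' * g i) := by
      rw [← Finset.sum_sub_distrib]
      exact Finset.sum_congr rfl fun i _ => by rw [hDer i, sub_mul]
    rw [h1, hE, hE', sub_self]
  have key : ∀ m : ℕ, ∀ j : Fin n →₀ ℕ, (∑ k, j k) = m → MvPowerSeries.coeff (R := ℂ) j V = 0 := by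
    intro m
    induction m using Nat.strong_induction_on with
    | _ m IH =>
      intro j hj
      by_cases hm : m ≤ 1
      · exact hVlow j (hj ▸ hm)
      push_neg at hm
      have h0 : MvPowerSeries.coeff (R := ℂ) j (∑ i, mvPderiv i V * g i) = 0 := by
        rw [hEq]; simp
      rw [map_sum] at h0
      have hterm : ∀ i, MvPowerSeries.coeff (R := ℂ) j (mvPderiv i V * g i)
          = (j i : ℂ) * lam i * MvPowerSeries.coeff (R := ℂ) j V := by
        intro i
        rw [MvPowerSeries.coeff_mul]
        have hzero : ∀ p ∈ Finset.HasAntidiagonal.antidiagonal j, p.2 ≠ Finsupp.single i 1 →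
            MvPowerSeries.coeff (R := ℂ) p.1 (mvPderiv i V) * MvPowerSeries.coeff (R := ℂ) p.2 (g i) = 0 := by
          rintro ⟨a, b⟩ hp hb
          rw [Finset.HasAntidiagonal.mem_antidiagonal] at hp
          by_cases hdb : (∑ k, b k) ≤ 1
          · rw [hg i b hdb, if_neg hb, mul_zero]
          · push_neg at hdb
            have hda : (∑ k, a k) + (∑ k, b k) = m := by rw [← degAdd, hp, hj]
            have hlt : (∑ k, ((a + Finsupp.single i 1 : Fin n →₀ ℕ)) k) < m := by
              rw [degAdd, degSingle]; omega
            have hz : MvPowerSeries.coeff (R := ℂ) (a + Finsupp.single i 1) V = 0 :=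
              IH _ hlt _ rfl
            have hd : MvPowerSeries.coeff (R := ℂ) a (mvPderiv i V)
                = ((a i : ℂ) + 1) * MvPowerSeries.coeff (R := ℂ) (a + Finsupp.single i 1) V := rfl
            rw [hd, hz, mul_zero, zero_mul]
        by_cases hji : j i = 0
        · rw [Finset.sum_eq_zero, hji]
          · push_cast; ring
          · rintro ⟨a, b⟩ hp
            refine hzero _ hp ?_
            intro hb
            rw [Finset.HasAntidiagonal.mem_antidiagonal] at hp
            have h2 : a i + b i = j i := by
              have := congrArg (fun f : Fin n →₀ ℕ => f i) hp
              simpa using this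
            have hb' : b = Finsupp.single i 1 := hb
            rw [hb'] at h2
            simp [Finsupp.single_apply, hji] at h2
        · have hle : Finsupp.single i 1 ≤ j := by
            rw [Finsupp.single_le_iff]; omega
          have hmem : (j - Finsupp.single i 1, Finsupp.single i 1) ∈ Finset.HasAntidiagonal.antidiagonal j := by
            rw [Finset.HasAntidiagonal.mem_antidiagonal]
            exact tsub_add_cancel_of_le hle
          rw [Finset.sum_eq_single_of_mem _ hmem]
          · have hc : j - Finsupp.single i 1 + Finsupp.single i 1 = j :=
              tsub_add_cancel_of_le hle
            have hgc : MvPowerSeries.coeff (R := ℂ) (Finsupp.single i 1) (g i) = lam i := by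
              rw [hg i _ (le_of_eq (degSingle i)), if_pos rfl]
            have hd : MvPowerSeries.coeff (R := ℂ) (j - Finsupp.single i 1) (mvPderiv i V)
                = ((((j - Finsupp.single i 1 : Fin n →₀ ℕ) i : ℕ) : ℂ) + 1)
                  * MvPowerSeries.coeff (R := ℂ) (j - Finsupp.single i 1 + Finsupp.single i 1) V := rfl
            rw [hd, hc, hgc]
            have hap : (j - Finsupp.single i 1 : Fin n →₀ ℕ) i = j i - 1 := by
              simp [Finsupp.tsub_apply, Finsupp.single_apply]
            rw [hap]
            have hcast : (((j i - 1 : ℕ) : ℂ) + 1) = (j i : ℂ) := by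
              have h1 : (j i - 1) + 1 = j i := by omega
              calc (((j i - 1 : ℕ) : ℂ) + 1) = (((j i - 1) + 1 : ℕ) : ℂ) := by push_cast; ring
                _ = (j i : ℂ) := by rw [h1]
            rw [hcast]; ring
          · rintro ⟨a, b⟩ hp hne
            refine hzero _ hp ?_
            intro hb
            apply hne
            rw [Finset.HasAntidiagonal.mem_antidiagonal] at hp
            have hb' : b = Finsupp.single i 1 := hb
            subst hb'
            have ha : a = j - Finsupp.single i 1 := eq_tsub_of_add_eq hp
            rw [ha]
      have h1 : (∑ i, (j i : ℂ) * lam i) * MvPowerSeries.coeff (R := ℂ) j V = 0 := by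
        rw [Finset.sum_mul, ← h0]
        exact Finset.sum_congr rfl fun i _ => (hterm i).symm
      rcases mul_eq_zero.mp h1 with h | h
      · exact absurd h (hres j (by omega))
      · exact h
  apply MvPowerSeries.ext
  intro j
  have := key (∑ k, j k) j rfl
  rw [hV, map_sub, sub_eq_zero] at this
  exact this
end
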